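/- There exists a non-full injective monotone map F : S → P between finite connected posets that is not final, yet mult(M, K_P) = mult(M∘F, K_S) for every functor M : P → vect_K. Concretely, take S the poset on {s₁,s₂,s₃,s₄} with s₁ ≤ s₃, s₂ ≤ s₃, s₂ ≤ s₄ (and no other nontrivial relations), P the poset on {p₁,p₂,p₃,p₄} with p₁ ≤ p₃ ≤ p₄ and p₂ ≤ p₃ (and hence p₁ ≤ p₄, p₂ ≤ p₄), and F(s_i) = p_i; then F is not final (since ↑p₃ ∩ im F-preimage structure gives p₃/F disconnected) but multiplicity of the entire interval module is preserved for all pointwise finite-dimensional modules. -/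

import Mathlib

open CategoryTheory CategoryTheory.Limits

/-- A subset `T` of a poset is connected (as a full subposet) if it is nonempty and any two
of its elements are joined by a finite zigzag of comparabilities within `T`. -/
def ZigzagConnected {P : Type*} [Preorder P] (T : Set P) : Prop :=
  T.Nonempty ∧ ∀ a b : T, Relation.ReflTransGen (fun x y : T => x.1 ≤ y.1 ∨ y.1 ≤ x.1) a b

/-- `F : S → P` is an injective monotone map between finite connected posets that is not full,
not final, and yet the rank of the canonical limit-to-colimit map (equivalently, by
connectedness, the multiplicity of the entire interval module) is preserved under restriction
along `F` for every pointwise finite-dimensional module `M : P ⥤ vect_K`. -/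
def MultPreservingNotFinal (K : Type) [Field K] (S P : Type) [PartialOrder S]
    [PartialOrder P] (F : S →o P) : Prop :=
  Finite S ∧ Finite P ∧
  ZigzagConnected (Set.univ : Set S) ∧ ZigzagConnected (Set.univ : Set P) ∧
  Function.Injective F ∧
  ¬ (∀ s s' : S, s ≤ s' ↔ F s ≤ F s') ∧
  ¬ F.monotone.functor.Final ∧
  ∀ M : P ⥤ ModuleCat K, (∀ q : P, FiniteDimensional K (M.obj q)) →
    ∀ (q : P) (s : S),
      Module.finrank K (LinearMap.range (limit.π M q ≫ colimit.ι M q).hom) =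
        Module.finrank K (LinearMap.range
          (limit.π (F.monotone.functor ⋙ M) s ≫ colimit.ι (F.monotone.functor ⋙ M) s).hom)

/-!
Every `p` has a connected set `{s | F s ≤ p}`: it has a greatest element, or it is all of `S`.
So `F` is initial and `limit.pre` identifies `lim M` with `lim (F ⋙ M)`. Since `P` has a top
element `p₄ = F s₄`, `colimit.ι M p₄` is an isomorphism and `colimit.ι (F ⋙ M) s₄` is a mono.
This means both limit-to-colimit maps have the rank of `lim M → M p₄`, and by connectedness
neither depends on the chosen index. But `F` is not final: `{s | p₃ ≤ F s} = {s₃, s₄}` is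
discrete.
-/

section Zigzag

variable {P : Type*} [Preorder P]

lemma ZigzagConnected.of_forall_reflTransGen {T : Set P} {a : P} (ha : a ∈ T)
    (h : ∀ b : T, Relation.ReflTransGen (fun x y : T => x.1 ≤ y.1 ∨ y.1 ≤ x.1) ⟨a, ha⟩ b) :
    ZigzagConnected T := by
  refine ⟨⟨a, ha⟩, fun x y => Relation.ReflTransGen.trans ?_ (h y)⟩
  exact Relation.ReflTransGen.mono (fun _ _ => Or.symm) _ _ (Relation.reflTransGen_swap.2 (h x))

lemma ZigzagConnected.of_isGreatest {T : Set P} {a : P} (h : IsGreatest T a) :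
    ZigzagConnected T :=
  of_forall_reflTransGen h.1 fun b => .single (Or.inr (h.2 b.2))

lemma not_zigzagConnected_pair {a b : P} (hab : ¬ a ≤ b) (hba : ¬ b ≤ a) :
    ¬ ZigzagConnected ({a, b} : Set P) := by
  rintro ⟨-, h⟩
  suffices ∀ y : ({a, b} : Set P), Relation.ReflTransGen
      (fun x y : ({a, b} : Set P) => x.1 ≤ y.1 ∨ y.1 ≤ x.1) ⟨a, .inl rfl⟩ y → y.1 = a by
    have := this ⟨b, .inr rfl⟩ (h _ _)
    exact hab (this ▸ le_rfl)
  intro y hy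
  induction hy with
  | refl => rfl
  | @tail y z _ hyz ih =>
    rcases z.2 with hz | hz
    · exact hz
    · rw [ih, hz] at hyz
      exact (hyz.elim hab hba).elim

lemma isConnected_of_zigzagConnected {T : Set P} (hT : ZigzagConnected T) {J : Type*}
    [Category J] (φ : T → J) (hφ : Function.Surjective φ)
    (hmap : ∀ a b : T, a.1 ≤ b.1 → Nonempty (φ a ⟶ φ b)) : IsConnected J := by
  have : Nonempty J := hT.1.to_subtype.map φ
  refine zigzag_isConnected fun X Y => ?_
  obtain ⟨a, rfl⟩ := hφ X
  obtain ⟨b, rfl⟩ := hφ Y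
  exact (hT.2 a b).lift φ fun x y hxy => hxy.imp (hmap x y) (hmap y x)

lemma zigzagConnected_of_isConnected {J : Type*} [Category J] [IsConnected J] {T : Set P}
    (φ : J → T) (hφ : Function.Surjective φ) (hmap : ∀ X Y : J, (X ⟶ Y) → (φ X).1 ≤ (φ Y).1) :
    ZigzagConnected T := by
  refine ⟨⟨_, (φ (Classical.arbitrary J)).2⟩, fun a b => ?_⟩
  obtain ⟨X, rfl⟩ := hφ a
  obtain ⟨Y, rfl⟩ := hφ b
  exact (isPreconnected_zigzag X Y).lift φ fun X Y hXY =>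
    hXY.imp (fun ⟨f⟩ => hmap X Y f) (fun ⟨f⟩ => hmap Y X f)

lemma ZigzagConnected.isConnected (h : ZigzagConnected (Set.univ : Set P)) : IsConnected P :=
  isConnected_of_zigzagConnected h Subtype.val (fun p => ⟨⟨p, trivial⟩, rfl⟩)
    fun _ _ hab => ⟨homOfLE hab⟩

end Zigzag

namespace OrderHom

variable {S P : Type*} [Preorder S] [Preorder P] (F : S →o P)

lemma initial_of_zigzagConnected (h : ∀ p, ZigzagConnected {s | F s ≤ p}) :
    F.monotone.functor.Initial where
  out p := isConnected_of_zigzagConnected (h p)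
    (fun s => CostructuredArrow.mk (Y := s.1) (homOfLE s.2))
    (fun X => ⟨⟨X.left, leOfHom X.hom⟩, (CostructuredArrow.eq_mk X).symm⟩)
    fun _ _ hab => ⟨CostructuredArrow.homMk (homOfLE hab)⟩

lemma zigzagConnected_of_final [F.monotone.functor.Final] (p : P) :
    ZigzagConnected {s | p ≤ F s} :=
  zigzagConnected_of_isConnected (J := StructuredArrow p F.monotone.functor)
    (fun X => ⟨X.right, leOfHom X.hom⟩) (fun s => ⟨StructuredArrow.mk (homOfLE s.2), rfl⟩)
    fun _ _ f => leOfHom f.right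

end OrderHom

section LimitToColimit

variable {J C : Type*} [Category J] [Category C]

lemma limit_π_comp_colimit_ι_eq [IsPreconnected J] (M : J ⥤ C) [HasLimit M] [HasColimit M]
    (j j' : J) : limit.π M j ≫ colimit.ι M j = limit.π M j' ≫ colimit.ι M j' :=
  constant_of_preserves_morphisms (fun j => limit.π M j ≫ colimit.ι M j)
    (fun _ _ f => by rw [← limit.w M f, Category.assoc, colimit.w M f]) j j'

lemma mono_colimit_ι_comp_of_isTerminal {D : Type*} [Category D] (F : J ⥤ D) (M : D ⥤ C)
    [HasColimit (F ⋙ M)] [HasColimit M] {j : J} (hj : IsTerminal (F.obj j)) :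
    Mono (colimit.ι (F ⋙ M) j) :=
  have := isIso_ι_of_isTerminal hj M
  mono_of_mono_fac (colimit.ι_pre M F j)

end LimitToColimit

section Rank

variable {R : Type*} [Ring R] {A B C : ModuleCat R}

lemma ModuleCat.range_hom_comp_of_epi (f : A ⟶ B) [Epi f] (g : B ⟶ C) :
    LinearMap.range (f ≫ g).hom = LinearMap.range g.hom := by
  rw [ModuleCat.hom_comp]
  exact LinearMap.range_comp_of_range_eq_top _ (ModuleCat.range_eq_top_of_epi f)

lemma ModuleCat.finrank_range_hom_comp_of_mono (f : A ⟶ B) (g : B ⟶ C) [Mono g] :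
    Module.finrank R (LinearMap.range (f ≫ g).hom) = Module.finrank R (LinearMap.range f.hom) := by
  rw [ModuleCat.hom_comp, LinearMap.range_comp]
  exact (Submodule.equivMapOfInjective _ ((ModuleCat.mono_iff_injective g).1 ‹_›) _).finrank_eq.symm

end Rank

theorem finrank_range_limit_π_comp_colimit_ι_eq_of_initial (K : Type*) [Field K] {J D : Type}
    [SmallCategory J] [SmallCategory D] [IsPreconnected J] [IsPreconnected D]
    (F : J ⥤ D) [F.Initial] {j₀ : J} (hj₀ : IsTerminal (F.obj j₀)) (M : D ⥤ ModuleCat K)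
    (d : D) (j : J) :
    Module.finrank K (LinearMap.range (limit.π M d ≫ colimit.ι M d).hom) =
      Module.finrank K (LinearMap.range (limit.π (F ⋙ M) j ≫ colimit.ι (F ⋙ M) j).hom) := by
  have := isIso_ι_of_isTerminal hj₀ M
  have := mono_colimit_ι_comp_of_isTerminal F M hj₀
  calc _ = Module.finrank K (LinearMap.range
          (limit.π M (F.obj j₀) ≫ colimit.ι M (F.obj j₀)).hom) := by
        rw [limit_π_comp_colimit_ι_eq M d]
    _ = Module.finrank K (LinearMap.range (limit.pre M F ≫ limit.π (F ⋙ M) j₀).hom) := by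
        rw [ModuleCat.finrank_range_hom_comp_of_mono, limit.pre_π]
        rfl
    _ = Module.finrank K (LinearMap.range
          (limit.π (F ⋙ M) j₀ ≫ colimit.ι (F ⋙ M) j₀).hom) := by
        rw [ModuleCat.range_hom_comp_of_epi, ModuleCat.finrank_range_hom_comp_of_mono]
    _ = _ := by rw [limit_π_comp_colimit_ι_eq (F ⋙ M) j₀]

inductive S4 : Type | s1 | s2 | s3 | s4
deriving DecidableEq

inductive P4 : Type | p1 | p2 | p3 | p4
deriving DecidableEq

namespace S4

instance : Fintype S4 := ⟨{s1, s2, s3, s4}, fun x => by cases x <;> decide⟩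

def le : S4 → S4 → Bool
  | s1, s1 | s1, s3 | s2, s2 | s2, s3 | s2, s4 | s3, s3 | s4, s4 => true
  | _, _ => false

instance : PartialOrder S4 where
  le a b := le a b
  le_refl := by decide
  le_trans := by decide
  le_antisymm := by decide

instance : DecidableRel (α := S4) (· ≤ ·) := fun a b => inferInstanceAs (Decidable (le a b))

end S4

namespace P4

instance : Fintype P4 := ⟨{p1, p2, p3, p4}, fun x => by cases x <;> decide⟩

def le : P4 → P4 → Bool
  | p1, p1 | p1, p3 | p1, p4 | p2, p2 | p2, p3 | p2, p4 | p3, p3 | p3, p4 | p4, p4 => true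
  | _, _ => false

instance : PartialOrder P4 where
  le a b := le a b
  le_refl := by decide
  le_trans := by decide
  le_antisymm := by decide

instance : DecidableRel (α := P4) (· ≤ ·) := fun a b => inferInstanceAs (Decidable (le a b))

instance : OrderTop P4 where
  top := p4
  le_top := by decide

lemma zigzagConnected_univ : ZigzagConnected (Set.univ : Set P4) :=
  .of_isGreatest isGreatest_univ

end P4

namespace S4

def toP4 : S4 →o P4 where
  toFun
    | s1 => .p1 | s2 => .p2 | s3 => .p3 | s4 => .p4
  monotone' := by decide

lemma zigzagConnected_univ : ZigzagConnected (Set.univ : Set S4) :=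
  .of_forall_reflTransGen (a := s2) trivial fun
    | ⟨s1, _⟩ => .tail (.single (b := ⟨s3, trivial⟩) (Or.inl (show s2 ≤ s3 by decide)))
        (Or.inr (show s1 ≤ s3 by decide))
    | ⟨s2, _⟩ => .refl
    | ⟨s3, _⟩ => .single (Or.inl (show s2 ≤ s3 by decide))
    | ⟨s4, _⟩ => .single (Or.inl (show s2 ≤ s4 by decide))

lemma toP4_initial : toP4.monotone.functor.Initial :=
  toP4.initial_of_zigzagConnected fun
    | .p1 => .of_isGreatest (a := s1) ⟨by decide, fun s => by revert s; decide⟩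
    | .p2 => .of_isGreatest (a := s2) ⟨by decide, fun s => by revert s; decide⟩
    | .p3 => .of_isGreatest (a := s3) ⟨by decide, fun s => by revert s; decide⟩
    | .p4 => by
      convert zigzagConnected_univ
      exact Set.eq_univ_of_forall (by decide)

lemma toP4_not_final : ¬ toP4.monotone.functor.Final := fun _ => by
  have h := toP4.zigzagConnected_of_final .p3
  have : {s | P4.p3 ≤ toP4 s} = {s3, s4} := by ext s; revert s; decide
  exact not_zigzagConnected_pair (by decide) (by decide) (this ▸ h)

end S4

/-- There exists a non-full injective monotone map `F : S → P` between finite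
connected posets that is not final, yet `mult(M, K_P) = mult(M ∘ F, K_S)` for every functor
`M : P ⥤ vect_K`. -/
theorem exists_non_full_not_final_multiplicity_preserving (K : Type) [Field K] :
    ∃ (S P : Type) (iS : PartialOrder S) (iP : PartialOrder P)
      (F : @OrderHom S P iS.toPreorder iP.toPreorder),
      @MultPreservingNotFinal K _ S P iS iP F := by
  refine ⟨S4, P4, inferInstance, inferInstance, S4.toP4, Finite.of_fintype _,
    Finite.of_fintype _, S4.zigzagConnected_univ, P4.zigzagConnected_univ, by decide,
    fun h => absurd ((h .s3 .s4).2 (by decide)) (by decide), S4.toP4_not_final,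
    fun M _ q s => ?_⟩
  have := S4.zigzagConnected_univ.isConnected
  have := P4.zigzagConnected_univ.isConnected
  have := S4.toP4_initial
  exact finrank_range_limit_π_comp_colimit_ι_eq_of_initial K _ (j₀ := .s4) isTerminalTop M q s
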